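/- arXiv:1711.10677 — 2 statements merged into one kernel-verified Lean document; each statement's English description precedes it below -/
import Mathlib

section
/- For every real z, log(1 + e^{-z}) ≤ log 2 - z/2 + z²/8, i.e. the logistic loss is bounded above by its second-order Taylor expansion at 0. -/
theorem logistic_le_taylor (z : ℝ) :
    Real.log (1 + Real.exp (-z)) ≤ Real.log 2 - z / 2 + z ^ 2 / 8 := by
  have h1 : 1 + Real.exp (-z) = Real.exp (-(z/2)) * (2 * Real.cosh (z/2)) := by
    rw [Real.cosh_eq, mul_div_cancel₀ _ (two_ne_zero), mul_add, ← Real.exp_add, ← Real.exp_add]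
    ring_nf; rw [Real.exp_zero]; ring
  have hc : 0 < Real.cosh (z/2) := Real.cosh_pos (z/2)
  rw [h1, Real.log_mul (Real.exp_ne_zero _) (by positivity), Real.log_exp,
    Real.log_mul two_ne_zero hc.ne']
  have := Real.log_le_log hc (Real.cosh_le_exp_half_sq (z/2))
  rw [Real.log_exp] at this
  nlinarith
end

section
/- Let a ∈ ℝ^{d₁} and b ∈ ℝ^{d₂} be nonzero vectors, and let U be the (d₁+d₂)×(d₁+d₂) block matrix with blocks [[c₂ a aᵀ, (1-c₁) a bᵀ], [(1-c₁) b aᵀ, c₀ b bᵀ]], where c₀, c₁, c₂ are reals with c₁ ≠ 1. Then the nonzero eigenvalues of U are λ± = (1/2)(c₂‖a‖² + c₀‖b‖² ± √((c₀‖b‖² - c₂‖a‖²)² + 4(1-c₁)²‖a‖²‖b‖²)). -/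
open Matrix

-- helper: mulVec of the block matrix
lemma block_mulVec {d₁ d₂ : ℕ} (a : Fin d₁ → ℝ) (b : Fin d₂ → ℝ)
    (c₀ c₁ c₂ : ℝ) (x : Fin d₁ ⊕ Fin d₂ → ℝ) :
    (Matrix.fromBlocks
      (c₂ • Matrix.vecMulVec a a) ((1 - c₁) • Matrix.vecMulVec a b)
      ((1 - c₁) • Matrix.vecMulVec b a) (c₀ • Matrix.vecMulVec b b)) *ᵥ x
    = Sum.elim
        (fun i => a i * (c₂ * (∑ j, a j * x (Sum.inl j)) + (1 - c₁) * (∑ j, b j * x (Sum.inr j))))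
        (fun i => b i * ((1 - c₁) * (∑ j, a j * x (Sum.inl j)) + c₀ * (∑ j, b j * x (Sum.inr j)))) := by
  funext k
  cases k with
  | inl i =>
      simp only [Matrix.mulVec, dotProduct, Fintype.sum_sum_type,
        Matrix.fromBlocks_apply₁₁, Matrix.fromBlocks_apply₁₂, Matrix.smul_apply,
        Matrix.vecMulVec_apply, smul_eq_mul, Sum.elim_inl, mul_add, Finset.mul_sum]
      congr 1 <;> exact Finset.sum_congr rfl fun j _ => by ring
  | inr i =>
      simp only [Matrix.mulVec, dotProduct, Fintype.sum_sum_type,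
        Matrix.fromBlocks_apply₂₁, Matrix.fromBlocks_apply₂₂, Matrix.smul_apply,
        Matrix.vecMulVec_apply, smul_eq_mul, Sum.elim_inr, mul_add, Finset.mul_sum]
      congr 1 <;> exact Finset.sum_congr rfl fun j _ => by ring

theorem block_outer_product_eigenvalues {d₁ d₂ : ℕ}
    (a : Fin d₁ → ℝ) (b : Fin d₂ → ℝ) (ha : a ≠ 0) (hb : b ≠ 0)
    (c₀ c₁ c₂ : ℝ) (hc₁ : c₁ ≠ 1)
    (U : Matrix (Fin d₁ ⊕ Fin d₂) (Fin d₁ ⊕ Fin d₂) ℝ)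
    (hU : U = Matrix.fromBlocks
      (c₂ • Matrix.vecMulVec a a) ((1 - c₁) • Matrix.vecMulVec a b)
      ((1 - c₁) • Matrix.vecMulVec b a) (c₀ • Matrix.vecMulVec b b))
    (lamPlus lamMinus : ℝ)
    (hP : lamPlus = (1/2) * (c₂ * (a ⬝ᵥ a) + c₀ * (b ⬝ᵥ b) +
      Real.sqrt ((c₀ * (b ⬝ᵥ b) - c₂ * (a ⬝ᵥ a)) ^ 2
        + 4 * (1 - c₁) ^ 2 * (a ⬝ᵥ a) * (b ⬝ᵥ b))))
    (hMn : lamMinus = (1/2) * (c₂ * (a ⬝ᵥ a) + c₀ * (b ⬝ᵥ b) -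
      Real.sqrt ((c₀ * (b ⬝ᵥ b) - c₂ * (a ⬝ᵥ a)) ^ 2
        + 4 * (1 - c₁) ^ 2 * (a ⬝ᵥ a) * (b ⬝ᵥ b)))) :
    ∀ lam : ℝ, lam ≠ 0 →
      (Module.End.HasEigenvalue (Matrix.toLin' U) lam ↔
        lam = lamPlus ∨ lam = lamMinus) := by
  intro lam hlam
  have hc : (1 : ℝ) - c₁ ≠ 0 := sub_ne_zero.mpr (Ne.symm hc₁)
  set A : ℝ := a ⬝ᵥ a with hAdef
  set B : ℝ := b ⬝ᵥ b with hBdef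
  have hAnn : 0 ≤ A := by
    rw [hAdef]; exact Finset.sum_nonneg fun j _ => mul_self_nonneg _
  have hBnn : 0 ≤ B := by
    rw [hBdef]; exact Finset.sum_nonneg fun j _ => mul_self_nonneg _
  have hA : 0 < A := lt_of_le_of_ne hAnn
    (fun h => ha (dotProduct_self_eq_zero.mp h.symm))
  have hB : 0 < B := lt_of_le_of_ne hBnn
    (fun h => hb (dotProduct_self_eq_zero.mp h.symm))
  set D : ℝ := (c₀ * B - c₂ * A) ^ 2 + 4 * (1 - c₁) ^ 2 * A * B with hDdef
  have hD0 : (0:ℝ) ≤ D := by nlinarith [sq_nonneg (c₀ * B - c₂ * A), sq_nonneg (1 - c₁), mul_pos hA hB]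
  have hR : Real.sqrt D ^ 2 = (c₀ * B - c₂ * A) ^ 2 + 4 * (1 - c₁) ^ 2 * A * B :=
    (Real.sq_sqrt hD0).trans hDdef
  set R : ℝ := Real.sqrt D with hRdef
  -- the quadratic characterization
  have key : ∀ μ : ℝ, ((μ - c₂ * A) * (μ - c₀ * B) = (1 - c₁) ^ 2 * A * B) ↔
      (μ = (1/2) * (c₂ * A + c₀ * B + R) ∨ μ = (1/2) * (c₂ * A + c₀ * B - R)) := by
    intro μ
    constructor
    · intro h
      have h0 : (μ - (1/2) * (c₂ * A + c₀ * B + R)) * (μ - (1/2) * (c₂ * A + c₀ * B - R)) = 0 := by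
        linear_combination h - (1/4) * hR
      rcases mul_eq_zero.mp h0 with h1 | h1
      · exact Or.inl (by linarith [sub_eq_zero.mp h1])
      · exact Or.inr (by linarith [sub_eq_zero.mp h1])
    · rintro (h | h) <;> subst h <;> linear_combination (1/4) * hR
  constructor
  · intro hev
    obtain ⟨x, hx1, hx0⟩ := hev.exists_hasEigenvector
    rw [Module.End.mem_eigenspace_iff, Matrix.toLin'_apply, hU, block_mulVec] at hx1
    set p : ℝ := ∑ j, a j * x (Sum.inl j) with hpdef
    set q : ℝ := ∑ j, b j * x (Sum.inr j) with hqdef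
    have e1 : ∀ i, a i * (c₂ * p + (1 - c₁) * q) = lam * x (Sum.inl i) := by
      intro i
      have := congrFun hx1 (Sum.inl i)
      simpa using this
    have e2 : ∀ i, b i * ((1 - c₁) * p + c₀ * q) = lam * x (Sum.inr i) := by
      intro i
      have := congrFun hx1 (Sum.inr i)
      simpa using this
    have E1 : A * (c₂ * p + (1 - c₁) * q) = lam * p := by
      calc A * (c₂ * p + (1 - c₁) * q)
          = ∑ j, a j * (a j * (c₂ * p + (1 - c₁) * q)) := by
            rw [hAdef]; simp [dotProduct, Finset.sum_mul]; exact Finset.sum_congr rfl fun j _ => by ring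
        _ = ∑ j, a j * (lam * x (Sum.inl j)) := by
            exact Finset.sum_congr rfl fun j _ => by rw [e1 j]
        _ = lam * p := by rw [hpdef, Finset.mul_sum]; exact Finset.sum_congr rfl fun j _ => by ring
    have E2 : B * ((1 - c₁) * p + c₀ * q) = lam * q := by
      calc B * ((1 - c₁) * p + c₀ * q)
          = ∑ j, b j * (b j * ((1 - c₁) * p + c₀ * q)) := by
            rw [hBdef]; simp [dotProduct, Finset.sum_mul]; exact Finset.sum_congr rfl fun j _ => by ring
        _ = ∑ j, b j * (lam * x (Sum.inr j)) := by
            exact Finset.sum_congr rfl fun j _ => by rw [e2 j]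
        _ = lam * q := by rw [hqdef, Finset.mul_sum]; exact Finset.sum_congr rfl fun j _ => by ring
    -- p and q not both zero
    have hpq : ¬ (p = 0 ∧ q = 0) := by
      rintro ⟨hp, hq⟩
      apply hx0
      funext k
      cases k with
      | inl i =>
          have := e1 i
          rw [hp, hq] at this
          simp only [mul_zero, add_zero, zero_add] at this
          have : lam * x (Sum.inl i) = 0 := by linarith [this]
          exact (mul_eq_zero.mp this).resolve_left hlam
      | inr i =>
          have := e2 i
          rw [hp, hq] at this
          simp only [mul_zero, add_zero, zero_add] at this
          have : lam * x (Sum.inr i) = 0 := by linarith [this]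
          exact (mul_eq_zero.mp this).resolve_left hlam
    have hp : p ≠ 0 := by
      intro hp
      apply hpq
      refine ⟨hp, ?_⟩
      have := E1
      rw [hp] at this
      simp only [mul_zero, zero_add, mul_zero] at this
      have h' : A * ((1 - c₁) * q) = 0 := by linarith
      rcases mul_eq_zero.mp h' with h | h
      · exact absurd h hA.ne'
      · rcases mul_eq_zero.mp h with h | h
        · exact absurd h hc
        · exact h
    have hq : q ≠ 0 := by
      intro hq
      apply hpq
      refine ⟨?_, hq⟩
      have := E2
      rw [hq] at this
      simp only [mul_zero, add_zero, mul_zero] at this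
      have h' : B * ((1 - c₁) * p) = 0 := by linarith
      rcases mul_eq_zero.mp h' with h | h
      · exact absurd h hB.ne'
      · rcases mul_eq_zero.mp h with h | h
        · exact absurd h hc
        · exact h
    have quad : (lam - c₂ * A) * (lam - c₀ * B) = (1 - c₁) ^ 2 * A * B := by
      have hmul : ((lam - c₂ * A) * (lam - c₀ * B)) * (p * q)
          = ((1 - c₁) ^ 2 * A * B) * (p * q) := by
        linear_combination (-(lam - c₀ * B) * q) * E1 + (-(1 - c₁) * A * q) * E2
      exact mul_right_cancel₀ (mul_ne_zero hp hq) hmul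
    rw [hP, hMn]
    exact (key lam).mp quad
  · intro hlam2
    have quad : (lam - c₂ * A) * (lam - c₀ * B) = (1 - c₁) ^ 2 * A * B := by
      apply (key lam).mpr
      rcases hlam2 with h | h
      · exact Or.inl (by rw [h, hP])
      · exact Or.inr (by rw [h, hMn])
    have hs : (1 - c₁) * B ≠ 0 := mul_ne_zero hc hB.ne'
    set x : Fin d₁ ⊕ Fin d₂ → ℝ :=
      Sum.elim (fun i => ((1 - c₁) * B) * a i) (fun i => (lam - c₂ * A) * b i) with hxdef
    have hx0 : x ≠ 0 := by
      obtain ⟨i, hi⟩ := Function.ne_iff.mp ha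
      intro h
      have := congrFun h (Sum.inl i)
      simp only [hxdef, Sum.elim_inl, Pi.zero_apply, mul_eq_zero] at this
      rcases this with (h' | h') | h'
      · exact hc h'
      · exact hB.ne' h'
      · exact hi h'
    apply Module.End.hasEigenvalue_of_hasEigenvector (x := x)
    refine ⟨Module.End.mem_eigenspace_iff.mpr ?_, hx0⟩
    rw [Matrix.toLin'_apply, hU, block_mulVec]
    have hp' : (∑ j, a j * x (Sum.inl j)) = ((1 - c₁) * B) * A := by
      rw [hAdef]; simp [hxdef, dotProduct, Finset.mul_sum]
      exact Finset.sum_congr rfl fun j _ => by ring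
    have hq' : (∑ j, b j * x (Sum.inr j)) = (lam - c₂ * A) * B := by
      rw [hBdef]; simp [hxdef, dotProduct, Finset.mul_sum]
      exact Finset.sum_congr rfl fun j _ => by ring
    rw [hp', hq']
    funext k
    cases k with
    | inl i =>
        simp only [Sum.elim_inl, hxdef, Pi.smul_apply, smul_eq_mul]
        have h3 : c₂ * (((1 - c₁) * B) * A) + (1 - c₁) * ((lam - c₂ * A) * B)
            = lam * ((1 - c₁) * B) := by ring
        rw [h3]; ring
    | inr i =>
        simp only [Sum.elim_inr, hxdef, Pi.smul_apply, smul_eq_mul]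
        have h3 : (1 - c₁) * (((1 - c₁) * B) * A) + c₀ * ((lam - c₂ * A) * B)
            = lam * (lam - c₂ * A) := by linear_combination -quad
        rw [h3]; ring
end
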